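/- arXiv:2408.16680 — 5 statements merged into one kernel-verified Lean document; each statement's English description precedes it below -/
import Mathlib

section
/- The Desrochers–Laporte constraints are satisfiable by any Hamiltonian tour: if σ is a bijection of {0,...,n-1} with σ(0)=0, setting x_{ij}=1 iff j immediately follows i in the cyclic tour and u_{σ(i)}=i for i ≥ 1 satisfies u_i − u_j + (n−1)x_{ij} + (n−3)x_{ji} ≤ n−2 for all distinct i,j ∈ N∖{0}. -/
/-- The Desrochers–Laporte subtour elimination constraints are satisfied by any
Hamiltonian tour rooted at 0: with `x i j = 1` iff `j` immediately follows `i` in the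
cyclic tour and `u i` the position of `i` in the tour, the DL inequality
`u i − u j + (n−1) x i j + (n−3) x j i ≤ n − 2` holds for all distinct nonzero `i, j`
(here the number of customers is `n + 3`, so `n−1, n−3, n−2` become `n+2, n, n+1`). -/
theorem dl_constraints_satisfied_by_tour {n : ℕ}
    (σ : Equiv.Perm (Fin (n + 3))) (h0 : σ 0 = 0)
    (x : Fin (n + 3) → Fin (n + 3) → ℤ)
    (hx : ∀ i j, x i j = if σ (σ.symm i + 1) = j then 1 else 0)
    (u : Fin (n + 3) → ℤ)
    (hu : ∀ i, i ≠ 0 → u i = ((σ.symm i : ℕ) : ℤ)) :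
    ∀ i j : Fin (n + 3), i ≠ 0 → j ≠ 0 → i ≠ j →
      u i - u j + ((n : ℤ) + 2) * x i j + (n : ℤ) * x j i ≤ (n : ℤ) + 1 := by
  intro i j hi hj hij
  have ha0 : σ.symm i ≠ 0 := fun h => hi (by simpa [h0] using congrArg σ h)
  have hb0 : σ.symm j ≠ 0 := fun h => hj (by simpa [h0] using congrArg σ h)
  have hab : σ.symm i ≠ σ.symm j := fun h => hij (by simpa using congrArg σ h)
  rw [hu i hi, hu j hj, hx, hx]
  have hva2 : (σ.symm i : ℕ) ≤ n + 2 := Nat.lt_succ_iff.mp (σ.symm i).isLt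
  have hvb2 : (σ.symm j : ℕ) ≤ n + 2 := Nat.lt_succ_iff.mp (σ.symm j).isLt
  have hva1 : 1 ≤ (σ.symm i : ℕ) := Nat.pos_of_ne_zero (fun h => ha0 (Fin.ext h))
  have hvb1 : 1 ≤ (σ.symm j : ℕ) := Nat.pos_of_ne_zero (fun h => hb0 (Fin.ext h))
  have hvab : (σ.symm i : ℕ) ≠ (σ.symm j : ℕ) := fun h => hab (Fin.ext h)
  have key : ∀ (a : Fin (n+3)) (c : Fin (n+3)), (σ (σ.symm c + 1) = a) ↔ (σ.symm c + 1 = σ.symm a) :=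
    fun a c => ⟨fun h => by rw [← h]; simp, fun h => by rw [h]; simp⟩
  simp only [key]
  by_cases h1 : σ.symm i + 1 = σ.symm j
  · have hne : σ.symm i ≠ Fin.last (n + 2) := by
      intro h
      rw [h] at h1
      simp at h1
      exact hb0 h1.symm
    have e1 : (σ.symm j : ℕ) = (σ.symm i : ℕ) + 1 := by
      rw [← h1, Fin.val_add_one, if_neg hne]
    by_cases h2 : σ.symm j + 1 = σ.symm i
    · have hne2 : σ.symm j ≠ Fin.last (n + 2) := by
        intro h
        rw [h] at h2
        simp at h2
        exact ha0 h2.symm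
      have e2 : (σ.symm i : ℕ) = (σ.symm j : ℕ) + 1 := by
        rw [← h2, Fin.val_add_one, if_neg hne2]
      omega
    · simp only [if_pos h1, if_neg h2]
      omega
  · by_cases h2 : σ.symm j + 1 = σ.symm i
    · have hne2 : σ.symm j ≠ Fin.last (n + 2) := by
        intro h
        rw [h] at h2
        simp at h2
        exact ha0 h2.symm
      have e2 : (σ.symm i : ℕ) = (σ.symm j : ℕ) + 1 := by
        rw [← h2, Fin.val_add_one, if_neg hne2]
      simp only [if_pos h2, if_neg h1]
      omega
    · simp only [if_neg h1, if_neg h2]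
      omega
end

section
/- Conversely, the DL constraints eliminate subtours: if x : N × N → {0,1} has exactly one outgoing and one incoming arc at every node (x_{ij}=1 counted over j ≠ i sums to 1, and similarly for incoming), and there exist integers u_i ∈ [1, n−1] for i ∈ N∖{0} with u_i − u_j + (n−1)x_{ij} + (n−3)x_{ji} ≤ n−2 for all distinct i, j ∈ N∖{0}, then the arc set {(i,j) : x_{ij}=1} forms a single Hamiltonian cycle on N. -/
open Finset in
/-- The DL constraints eliminate subtours: if every node has exactly one outgoing and one
incoming arc and integers `u i ∈ [1, n−1]` (for `i ≠ 0`) satisfy the DL inequalities,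
then the arcs `{(i,j) : x i j = 1}` form a single Hamiltonian cycle, i.e. the successor
permutation is one cycle covering all nodes. Here there are `n + 3` customers, so
`n−1, n−3, n−2` become `n+2, n, n+1`. -/
theorem dl_constraints_eliminate_subtours {n : ℕ}
    (x : Fin (n + 3) → Fin (n + 3) → ℕ)
    (hx01 : ∀ i j, x i j ≤ 1) (hxd : ∀ i, x i i = 0)
    (hout : ∀ i, ∑ j ∈ univ.filter (fun j => j ≠ i), x i j = 1)
    (hin : ∀ i, ∑ j ∈ univ.filter (fun j => j ≠ i), x j i = 1)
    (u : Fin (n + 3) → ℤ)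
    (hu : ∀ i : Fin (n + 3), i ≠ 0 → 1 ≤ u i ∧ u i ≤ (n : ℤ) + 2)
    (hDL : ∀ i j : Fin (n + 3), i ≠ 0 → j ≠ 0 → i ≠ j →
      u i - u j + ((n : ℤ) + 2) * (x i j : ℤ) + (n : ℤ) * (x j i : ℤ) ≤ (n : ℤ) + 1) :
    ∃ σ : Equiv.Perm (Fin (n + 3)),
      (∀ i, x i (σ i) = 1) ∧ σ.IsCycle ∧ σ.support = Finset.univ := by
  classical
  -- unique successor
  have hex : ∀ i, ∃ j, x i j = 1 ∧ ∀ k, x i k = 1 → k = j := by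
    intro i
    have h1 := hout i
    have hne : ∃ j ∈ univ.filter (fun j => j ≠ i), x i j = 1 := by
      by_contra h
      push_neg at h
      have hz : ∑ j ∈ univ.filter (fun j => j ≠ i), x i j = 0 := by
        apply Finset.sum_eq_zero
        intro j hj
        have := h j hj
        have := hx01 i j
        omega
      omega
    obtain ⟨j, hj, hxj⟩ := hne
    have hji : j ≠ i := (Finset.mem_filter.mp hj).2
    refine ⟨j, hxj, ?_⟩
    intro k hk
    by_contra hkj
    have hki : k ≠ i := by
      intro h; subst h; rw [hxd] at hk; omega
    have h2 : 2 ≤ ∑ j ∈ univ.filter (fun j => j ≠ i), x i j := by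
      have hsub : ({j, k} : Finset (Fin (n+3))) ⊆ univ.filter (fun j => j ≠ i) := by
        intro a ha
        simp only [Finset.mem_insert, Finset.mem_singleton] at ha
        rcases ha with rfl | rfl
        · exact hj
        · simp [hki]
      calc (2:ℕ) = ∑ a ∈ ({j, k} : Finset (Fin (n+3))), x i a := by
              rw [Finset.sum_pair (fun h => hkj h.symm)]; omega
        _ ≤ _ := Finset.sum_le_sum_of_subset hsub
    omega
  choose f hf1 hf2 using hex
  -- injectivity
  have hinj : Function.Injective f := by
    intro a b hab
    by_contra hne
    have hxa : x a (f a) = 1 := hf1 a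
    have hxb : x b (f a) = 1 := hab ▸ hf1 b
    set j := f a with hj
    have haj : a ≠ j := by
      intro h; rw [h] at hxa; rw [hxd] at hxa; omega
    have hbj : b ≠ j := by
      intro h; rw [h] at hxb; rw [hxd] at hxb; omega
    have h2 : 2 ≤ ∑ k ∈ univ.filter (fun k => k ≠ j), x k j := by
      have hsub : ({a, b} : Finset (Fin (n+3))) ⊆ univ.filter (fun k => k ≠ j) := by
        intro c hc
        simp only [Finset.mem_insert, Finset.mem_singleton] at hc
        rcases hc with rfl | rfl
        · simp [haj]
        · simp [hbj]
      calc (2:ℕ) = ∑ c ∈ ({a, b} : Finset (Fin (n+3))), x c j := by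
              rw [Finset.sum_pair hne]; omega
        _ ≤ _ := Finset.sum_le_sum_of_subset hsub
    have := hin j
    omega
  have hbij : Function.Bijective f := Finite.injective_iff_bijective.mp hinj
  set σ : Equiv.Perm (Fin (n + 3)) := Equiv.ofBijective f hbij with hσ
  have hσapp : ∀ i, σ i = f i := fun i => rfl
  have hxσ : ∀ i, x i (σ i) = 1 := fun i => hf1 i
  have hnofix : ∀ i, σ i ≠ i := by
    intro i h
    have := hxσ i
    rw [h, hxd] at this
    omega
  -- step lemma
  have hstep : ∀ i, i ≠ 0 → σ i ≠ 0 → u i + 1 ≤ u (σ i) := by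
    intro i hi hsi
    have hij : i ≠ σ i := fun h => hnofix i h.symm
    have hd := hDL i (σ i) hi hsi hij
    have h1 : x i (σ i) = 1 := hxσ i
    rw [h1] at hd
    have hge : (0:ℤ) ≤ (x (σ i) i : ℤ) := Int.ofNat_nonneg _
    have hn : (0:ℤ) ≤ (n:ℤ) := Int.ofNat_nonneg _
    push_cast at hd
    nlinarith
  -- every element is in the cycle of 0
  have key : ∀ i, σ.SameCycle 0 i := by
    intro i
    by_cases hi : i = 0
    · exact hi ▸ Equiv.Perm.SameCycle.refl σ 0
    by_contra hsc
    have horb : ∀ k : ℕ, (σ ^ k) i ≠ 0 ∧ u i + k ≤ u ((σ ^ k) i) := by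
      intro k
      induction k with
      | zero => simpa using hi
      | succ k ih =>
        obtain ⟨hk0, hku⟩ := ih
        have hnext : (σ ^ (k + 1)) i ≠ 0 := by
          intro h
          apply hsc
          have hsc2 : σ.SameCycle ((σ ^ (k + 1)) i) i :=
            Equiv.Perm.sameCycle_pow_left.mpr (Equiv.Perm.SameCycle.refl σ i)
          rw [h] at hsc2
          exact hsc2
        have heq : (σ ^ (k + 1)) i = σ ((σ ^ k) i) := by
          rw [pow_succ', Equiv.Perm.mul_apply]
        have := hstep ((σ ^ k) i) hk0 (by rw [← heq]; exact hnext)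
        rw [← heq] at this
        constructor
        · exact hnext
        · have hc : ((k + 1 : ℕ) : ℤ) = (k : ℤ) + 1 := by push_cast; ring
          rw [hc]
          linarith
    obtain ⟨h0, hub⟩ := horb (n + 2)
    have h1 := (hu i hi).1
    have h2 := (hu ((σ ^ (n + 2)) i) h0).2
    have hc : ((n + 2 : ℕ) : ℤ) = (n : ℤ) + 2 := by push_cast; ring
    rw [hc] at hub
    linarith
  refine ⟨σ, hxσ, ⟨0, hnofix 0, fun y _ => key y⟩, ?_⟩
  ext i
  simp [Equiv.Perm.mem_support, hnofix i]
end

section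
/- Under the degree constraints and the linking constraints x_{ij} = Σ_{k∉{i,j}} y_{ijk} = Σ_{k∉{i,j}} y_{kij} with all variables in {0,1}, one has y_{ijk} = 1 if and only if x_{ij} = 1 and x_{jk} = 1; consequently the linear objective Σ c_{ijk} y_{ijk} equals the quadratic objective Σ c_{ijk} x_{ij} x_{jk}. -/
open Finset in
/-- Under the degree constraints and the linking constraints
`x i j = Σ_{k∉{i,j}} y i j k = Σ_{k∉{i,j}} y k i j` with all variables binary,
`y i j k = 1` iff `x i j = 1` and `x j k = 1`, and hence the linear objective equals
the quadratic objective. Here there are `n + 4 ≥ 4` customers. -/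
theorem milp_linking_linearization {n : ℕ}
    (c : Fin (n + 4) → Fin (n + 4) → Fin (n + 4) → ℝ)
    (x : Fin (n + 4) → Fin (n + 4) → ℕ)
    (y : Fin (n + 4) → Fin (n + 4) → Fin (n + 4) → ℕ)
    (hx : ∀ i j, i ≠ j → x i j ≤ 1)
    (hy : ∀ i j k, i ≠ j → j ≠ k → i ≠ k → y i j k ≤ 1)
    (hout : ∀ i, ∑ j ∈ univ.filter (fun j => j ≠ i), x i j = 1)
    (hin : ∀ i, ∑ j ∈ univ.filter (fun j => j ≠ i), x j i = 1)
    (hlink1 : ∀ i j, i ≠ j → x i j = ∑ k ∈ univ.filter (fun k => k ≠ i ∧ k ≠ j), y i j k)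
    (hlink2 : ∀ i j, i ≠ j → x i j = ∑ k ∈ univ.filter (fun k => k ≠ i ∧ k ≠ j), y k i j) :
    (∀ i j k, i ≠ j → j ≠ k → i ≠ k → (y i j k = 1 ↔ x i j = 1 ∧ x j k = 1)) ∧
      ∑ i, ∑ j ∈ univ.filter (fun j => j ≠ i),
          ∑ k ∈ univ.filter (fun k => k ≠ i ∧ k ≠ j), c i j k * (y i j k : ℝ) =
        ∑ i, ∑ j ∈ univ.filter (fun j => j ≠ i),
          ∑ k ∈ univ.filter (fun k => k ≠ i ∧ k ≠ j),
            c i j k * (x i j : ℝ) * (x j k : ℝ) := by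
  have fwd : ∀ i j k : Fin (n+4), i ≠ j → j ≠ k → i ≠ k →
      y i j k = 1 → x i j = 1 ∧ x j k = 1 := by
    intro i j k hij hjk hik hy1
    constructor
    · have h1 := hlink1 i j hij
      have hk : k ∈ univ.filter (fun k' => k' ≠ i ∧ k' ≠ j) := by
        simp [Ne.symm hik, Ne.symm hjk]
      have hs : y i j k ≤ ∑ k' ∈ univ.filter (fun k' => k' ≠ i ∧ k' ≠ j), y i j k' :=
        Finset.single_le_sum (f := fun k' => y i j k') (fun a _ => Nat.zero_le _) hk
      have hle := hx i j hij
      omega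
    · have h2 := hlink2 j k hjk
      have hi : i ∈ univ.filter (fun k' => k' ≠ j ∧ k' ≠ k) := by
        simp [hij, hik]
      have hs : y i j k ≤ ∑ k' ∈ univ.filter (fun k' => k' ≠ j ∧ k' ≠ k), y k' j k :=
        Finset.single_le_sum (f := fun k' => y k' j k) (fun a _ => Nat.zero_le _) hi
      have hle := hx j k hjk
      omega
  have key : ∀ i j k : Fin (n+4), i ≠ j → j ≠ k → i ≠ k →
      (y i j k = 1 ↔ x i j = 1 ∧ x j k = 1) := by
    intro i j k hij hjk hik
    refine ⟨fwd i j k hij hjk hik, ?_⟩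
    rintro ⟨hx1, hx2⟩
    by_contra hne
    have hy0 : y i j k = 0 := by have := hy i j k hij hjk hik; omega
    have h1 := hlink1 i j hij
    rw [hx1] at h1
    have hsum : ∑ k' ∈ univ.filter (fun k' => k' ≠ i ∧ k' ≠ j), y i j k' ≠ 0 := by omega
    obtain ⟨k₀, hk₀s, hk₀⟩ := Finset.exists_ne_zero_of_sum_ne_zero hsum
    simp only [mem_filter, mem_univ, true_and] at hk₀s
    have hk₀k : k₀ ≠ k := by rintro rfl; exact hk₀ hy0
    have hy1 : y i j k₀ = 1 := by
      have := hy i j k₀ hij (Ne.symm hk₀s.2) (Ne.symm hk₀s.1)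
      omega
    have hxjk₀ : x j k₀ = 1 := (fwd i j k₀ hij (Ne.symm hk₀s.2) (Ne.symm hk₀s.1) hy1).2
    have hsub : ({k, k₀} : Finset (Fin (n+4))) ⊆ univ.filter (fun j' => j' ≠ j) := by
      intro a ha
      simp only [mem_insert, mem_singleton] at ha
      rcases ha with rfl | rfl
      · simp [Ne.symm hjk]
      · simp [hk₀s.2]
    have hpair := Finset.sum_le_sum_of_subset (f := fun j' => x j j') hsub
    rw [Finset.sum_pair (Ne.symm hk₀k), hout j] at hpair
    omega
  refine ⟨key, ?_⟩
  refine Finset.sum_congr rfl fun i _ => Finset.sum_congr rfl fun j hj =>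
    Finset.sum_congr rfl fun k hk => ?_
  simp only [mem_filter, mem_univ, true_and] at hj hk
  have hij : i ≠ j := Ne.symm hj
  have hjk : j ≠ k := Ne.symm hk.2
  have hik : i ≠ k := Ne.symm hk.1
  have hterm : y i j k = x i j * x j k := by
    have h := key i j k hij hjk hik
    have hyle := hy i j k hij hjk hik
    rcases Nat.le_one_iff_eq_zero_or_eq_one.mp hyle with h0 | h1
    · rw [h0]
      symm
      by_contra hne
      have hne0 : x i j ≠ 0 ∧ x j k ≠ 0 := by
        constructor <;> intro h' <;> simp [h'] at hne
      have hb1 := hx i j hij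
      have hb2 := hx j k hjk
      have : y i j k = 1 := h.mpr ⟨by omega, by omega⟩
      omega
    · obtain ⟨a, b⟩ := h.mp h1
      rw [h1, a, b]
  rw [hterm]
  push_cast
  ring
end

section
/- The DP value function is well-defined and correct: define V on states (U, i, j, f) by the Bellman recursion V(U,i,j,f) = min_{k∈U} [c_{ijk} + V(U∖{k}, j, k, f)] when U ≠ ∅, and V(∅,i,j,f) = c_{j,0,f} + c_{i,j,0}. Then for the initial state, min_{f ∈ N∖{0}} V(N∖{0,f}, 0, f, f) equals the minimum QTSP tour cost over tours starting at customer 0. -/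
/-- QTSP cost of a tour, indices modulo `n + 3`. -/
noncomputable def tourCost {n : ℕ} (c : Fin (n + 3) → Fin (n + 3) → Fin (n + 3) → ℝ)
    (σ : Equiv.Perm (Fin (n + 3))) : ℝ :=
  ∑ i : Fin (n + 3), c (σ (i - 1)) (σ i) (σ (i + 1))

/-- The DIDP Bellman value function for QTSP: `U` is the set of unvisited customers,
`i` the previous customer, `j` the current customer, `f` the first customer after 0. -/
noncomputable def dpV {n : ℕ} (c : Fin (n + 3) → Fin (n + 3) → Fin (n + 3) → ℝ) :
    Finset (Fin (n + 3)) → Fin (n + 3) → Fin (n + 3) → Fin (n + 3) → ℝ := fun U i j f =>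
  if h : U.Nonempty then
    U.attach.inf' (by simpa using h)
      (fun k => c i j k.1 + dpV c (U.erase k.1) j k.1 f)
  else c j 0 f + c i j 0
termination_by U => U.card
decreasing_by exact Finset.card_erase_lt_of_mem k.2

open Fin.NatCast

noncomputable def trisum {n : ℕ} (c : Fin (n + 3) → Fin (n + 3) → Fin (n + 3) → ℝ) :
    Fin (n+3) → Fin (n+3) → List (Fin (n+3)) → ℝ
  | _, _, [] => 0
  | a, b, z :: L => c a b z + trisum c b z L

noncomputable def pcost {n : ℕ} (c : Fin (n + 3) → Fin (n + 3) → Fin (n + 3) → ℝ)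
    (f : Fin (n+3)) : Fin (n+3) → Fin (n+3) → List (Fin (n+3)) → ℝ
  | i, j, [] => c j 0 f + c i j 0
  | i, j, k :: l => c i j k + pcost c f j k l

lemma pcost_eq_trisum {n : ℕ} (c : Fin (n + 3) → Fin (n + 3) → Fin (n + 3) → ℝ)
    (f : Fin (n+3)) (l : List (Fin (n+3))) : ∀ i j,
    pcost c f i j l = trisum c i j (l ++ [0, f]) := by
  induction l with
  | nil => intro i j; simp [pcost, trisum]; ring
  | cons k l ih => intro i j; simp [pcost, trisum, ih]

lemma trisum_eq_sum {n : ℕ} (c : Fin (n + 3) → Fin (n + 3) → Fin (n + 3) → ℝ)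
    (L : List (Fin (n+3))) : ∀ (σ' : ℕ → Fin (n+3)) (s : ℕ) (a b : Fin (n+3)),
    σ' s = a → σ' (s+1) = b → (∀ t (h : t < L.length), σ' (s+2+t) = L[t]) →
    trisum c a b L = ∑ t ∈ Finset.range L.length,
      c (σ' (s+t)) (σ' (s+t+1)) (σ' (s+t+2)) := by
  induction L with
  | nil => intro σ' s a b _ _ _; simp [trisum]
  | cons z L ih =>
    intro σ' s a b ha hb hL
    have hz : σ' (s+2) = z := by exact hL 0 (by simp)
    rw [List.length_cons, Finset.sum_range_succ']
    have hrec := ih σ' (s+1) b z hb hz (fun t ht => by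
      have h2 := hL (t+1) (by simpa using Nat.succ_lt_succ ht)
      simpa [show s+1+2+t = s+2+(t+1) by omega] using h2)
    have e : ∀ t : ℕ, s+1+t = s+(t+1) := fun t => by omega
    simp only [trisum, hrec, e]
    simp [ha, hb, hz, add_comm]

lemma tourCost_eq_sum_range {n : ℕ} (c : Fin (n + 3) → Fin (n + 3) → Fin (n + 3) → ℝ)
    (σ : Equiv.Perm (Fin (n + 3))) :
    tourCost c σ = ∑ t ∈ Finset.range (n+3),
      c (σ ((t:ℕ) : Fin (n+3))) (σ ((t+1 : ℕ) : Fin (n+3))) (σ ((t+2 : ℕ) : Fin (n+3))) := by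
  rw [tourCost, ← Fintype.sum_equiv (Equiv.addRight (1 : Fin (n+3)))
      (fun i => c (σ i) (σ (i+1)) (σ (i+2)))
      (fun i => c (σ (i - 1)) (σ i) (σ (i + 1)))
      (fun i => by simp [Equiv.addRight]; rw [add_assoc, one_add_one_eq_two])]
  rw [← Fin.sum_univ_eq_sum_range
      (fun t => c (σ ((t:ℕ) : Fin (n+3))) (σ ((t+1 : ℕ) : Fin (n+3))) (σ ((t+2 : ℕ) : Fin (n+3))))]
  apply Finset.sum_congr rfl
  intro i _
  have h1 : ((i.val : ℕ) : Fin (n+3)) = i := Fin.cast_val_eq_self i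
  have h2 : ((i.val + 1 : ℕ) : Fin (n+3)) = i + 1 := by push_cast [h1]; ring
  have h3 : ((i.val + 2 : ℕ) : Fin (n+3)) = i + 2 := by push_cast [h1]; ring
  rw [h1, h2, h3]

/-- The bridge: a tour whose order agrees with `0 :: f :: l` has cost `pcost c f 0 f l`. -/
lemma tourCost_eq_pcost {n : ℕ} (c : Fin (n + 3) → Fin (n + 3) → Fin (n + 3) → ℝ)
    (σ : Equiv.Perm (Fin (n + 3))) (f : Fin (n+3)) (l : List (Fin (n+3)))
    (h0 : σ 0 = 0) (h1 : σ 1 = f) (hlen : l.length = n + 1)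
    (hget : ∀ t (h : t < l.length), σ ((2 + t : ℕ) : Fin (n+3)) = l[t]) :
    tourCost c σ = pcost c f 0 f l := by
  have hm : (((n+3 : ℕ)) : Fin (n+3)) = 0 := Fin.natCast_self _
  have hm1 : (((n+4 : ℕ)) : Fin (n+3)) = 1 := by
    rw [show n+4 = (n+3)+1 by ring, Nat.cast_add, hm, Nat.cast_one, zero_add]
  rw [pcost_eq_trisum]
  rw [trisum_eq_sum c (l ++ [0, f]) (fun t => σ ((t : ℕ) : Fin (n+3))) 0 0 f
      (by simpa using h0) (by simpa using h1) ?_]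
  · rw [tourCost_eq_sum_range]
    apply Finset.sum_congr (by simp [hlen]) (fun t _ => by norm_num)
  · intro t ht
    simp only [List.length_append, hlen, List.length_cons, List.length_nil] at ht
    rcases lt_trichotomy t (n+1) with h | h | h
    · rw [List.getElem_append_left (by omega)]
      simpa [Nat.add_comm 2 t] using hget t (by omega)
    · subst h
      rw [show 0+2+(n+1) = n+3 by omega]
      beta_reduce
      rw [hm, h0, List.getElem_append_right (by omega)]
      simp [hlen]
    · have ht2 : t = n + 2 := by omega
      subst ht2
      rw [show 0+2+(n+2) = n+4 by omega]
      beta_reduce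
      rw [hm1, h1, List.getElem_append_right (by omega)]
      simp [hlen]



lemma dpV_le_pcost {n : ℕ} (c : Fin (n + 3) → Fin (n + 3) → Fin (n + 3) → ℝ)
    (f : Fin (n+3)) (l : List (Fin (n+3))) (hnd : l.Nodup) :
    ∀ i j, dpV c l.toFinset i j f ≤ pcost c f i j l := by
  induction l with
  | nil =>
    intro i j
    rw [List.toFinset_nil, dpV]
    simp [pcost]
  | cons k l ih =>
    intro i j
    simp only [List.nodup_cons] at hnd
    have hne : (k :: l).toFinset.Nonempty := ⟨k, by simp⟩
    rw [dpV, dif_pos hne]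
    have hk : k ∈ (k :: l).toFinset := by simp
    refine le_trans (Finset.inf'_le _ (Finset.mem_attach _ ⟨k, hk⟩)) ?_
    simp only [pcost]
    have herase : (k :: l).toFinset.erase k = l.toFinset := by
      rw [List.toFinset_cons, Finset.erase_insert (by simp [hnd.1])]
    rw [herase]
    exact add_le_add (le_refl _) (ih hnd.2 j k)

lemma exists_list_dpV_eq {n : ℕ} (c : Fin (n + 3) → Fin (n + 3) → Fin (n + 3) → ℝ)
    (f : Fin (n+3)) (U : Finset (Fin (n+3))) :
    ∀ i j, ∃ l : List (Fin (n+3)), l.Nodup ∧ l.toFinset = U ∧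
      dpV c U i j f = pcost c f i j l := by
  induction U using Finset.strongInduction with
  | _ U ih =>
    intro i j
    by_cases h : U.Nonempty
    · have hattach : U.attach.Nonempty := by simpa using h
      obtain ⟨k, -, hk⟩ := Finset.exists_mem_eq_inf' hattach
        (fun k => c i j k.1 + dpV c (U.erase k.1) j k.1 f)
      obtain ⟨l, hnd, htf, he⟩ := ih (U.erase k.1) (Finset.erase_ssubset k.2) j k.1
      refine ⟨k.1 :: l, ?_, ?_, ?_⟩
      · exact List.nodup_cons.mpr ⟨fun hm => Finset.notMem_erase k.1 U (htf ▸ List.mem_toFinset.mpr hm), hnd⟩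
      · rw [List.toFinset_cons, htf, Finset.insert_erase k.2]
      · rw [dpV, dif_pos h, hk, he]; rfl
    · rw [Finset.not_nonempty_iff_eq_empty] at h
      subst h
      exact ⟨[], by simp, by simp, by rw [dpV]; simp [pcost]⟩

lemma exists_list_of_perm {n : ℕ} (c : Fin (n + 3) → Fin (n + 3) → Fin (n + 3) → ℝ)
    (σ : Equiv.Perm (Fin (n + 3))) (h0 : σ 0 = 0) :
    ∃ l : List (Fin (n+3)), l.Nodup ∧ l.toFinset = Finset.univ \ {0, σ 1} ∧
      tourCost c σ = pcost c (σ 1) 0 (σ 1) l := by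
  refine ⟨(List.range (n+1)).map (fun t => σ ((t+2 : ℕ) : Fin (n+3))), ?_, ?_, ?_⟩
  · refine List.Nodup.map_on ?_ List.nodup_range
    intro t ht t' ht' he
    simp only [List.mem_range] at ht ht'
    have := σ.injective he
    have hv := congrArg Fin.val this
    simp only [Fin.val_natCast] at hv
    rw [Nat.mod_eq_of_lt (by omega), Nat.mod_eq_of_lt (by omega)] at hv
    omega
  · ext x
    simp only [List.mem_toFinset, List.mem_map, List.mem_range, Finset.mem_sdiff,
      Finset.mem_univ, true_and, Finset.mem_insert, Finset.mem_singleton]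
    constructor
    · rintro ⟨t, ht, rfl⟩
      push_neg
      constructor
      · intro hx
        rw [← h0] at hx
        have hv := congrArg Fin.val (σ.injective hx)
        rw [Fin.val_natCast, Nat.mod_eq_of_lt (by omega)] at hv
        simp [Fin.val_zero] at hv
      · intro hx
        have hv := congrArg Fin.val (σ.injective hx)
        rw [Fin.val_natCast, Nat.mod_eq_of_lt (by omega)] at hv
        simp [Fin.val_one] at hv
    · rintro hx
      push_neg at hx
      obtain ⟨k, hσk⟩ : ∃ k, σ k = x := ⟨σ.symm x, σ.apply_symm_apply x⟩
      have hk0 : k ≠ 0 := by rintro rfl; rw [h0] at hσk; exact hx.1 hσk.symm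
      have hk1 : k ≠ 1 := by rintro rfl; exact hx.2 hσk.symm
      have hkv : 2 ≤ k.val := by
        rcases Nat.lt_or_ge k.val 2 with h | h
        · interval_cases hv : k.val
          · exact absurd (Fin.ext hv) hk0
          · exact absurd (Fin.ext (by simp [hv, Fin.val_one])) hk1
        · exact h
      refine ⟨k.val - 2, by omega, ?_⟩
      have : ((k.val - 2 + 2 : ℕ) : Fin (n+3)) = k := by
        rw [show k.val - 2 + 2 = k.val by omega, Fin.cast_val_eq_self]
      rw [this, hσk]
  · apply tourCost_eq_pcost c σ (σ 1) _ h0 rfl (by simp)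
    intro t ht
    simp only [List.length_map, List.length_range] at ht
    simp [List.getElem_map, List.getElem_range, Nat.add_comm 2 t]

lemma exists_perm_of_list {n : ℕ} (c : Fin (n + 3) → Fin (n + 3) → Fin (n + 3) → ℝ)
    (f : Fin (n+3)) (hf : f ≠ 0) (l : List (Fin (n+3))) (hnd : l.Nodup)
    (htf : l.toFinset = Finset.univ \ {0, f}) :
    ∃ σ : Equiv.Perm (Fin (n + 3)), σ 0 = 0 ∧ tourCost c σ = pcost c f 0 f l := by
  have h0l : (0 : Fin (n+3)) ∉ l := by
    intro hm
    have := htf ▸ List.mem_toFinset.mpr hm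
    simp at this
  have hfl : f ∉ l := by
    intro hm
    have := htf ▸ List.mem_toFinset.mpr hm
    simp at this
  have hlen : l.length = n + 1 := by
    have h1 : l.toFinset.card = l.length := List.toFinset_card_of_nodup hnd
    have h2 : (Finset.univ \ ({0, f} : Finset (Fin (n+3)))).card = n + 1 := by
      rw [Finset.card_sdiff_of_subset (Finset.subset_univ _), Finset.card_univ]
      rw [Finset.card_insert_of_notMem (by simpa using (Ne.symm hf)), Finset.card_singleton]
      simp
    rw [htf, h2] at h1
    exact h1.symm
  set L : List (Fin (n+3)) := 0 :: f :: l with hL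
  have hLlen : L.length = n + 3 := by simp [hL, hlen]
  have hLnd : L.Nodup := by
    simp only [hL, List.nodup_cons]
    exact ⟨by simp [Ne.symm hf, h0l], hfl, hnd⟩
  have hg : ∀ k : Fin (n+3), k.val < L.length := fun k => by rw [hLlen]; exact k.isLt
  set g : Fin (n+3) → Fin (n+3) := fun k => L.get ⟨k.val, hg k⟩ with hgdef
  have ginj : Function.Injective g := by
    intro a b hab
    have h2 := List.nodup_iff_injective_get.mp hLnd hab
    rw [Fin.mk.injEq] at h2
    exact Fin.ext h2
  obtain σbij := (Finite.injective_iff_bijective).mp ginj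
  set σ : Equiv.Perm (Fin (n+3)) := Equiv.ofBijective g σbij with hσ
  have hσapp : ∀ k, σ k = g k := fun k => rfl
  have hσ0 : σ 0 = 0 := by rw [hσapp]; simp [hgdef, hL]
  have hσ1 : σ 1 = f := by
    rw [hσapp]
    have h1v : (1 : Fin (n+3)).val = 1 := rfl
    simp [hgdef, hL, h1v]
  refine ⟨σ, hσ0, ?_⟩
  apply tourCost_eq_pcost c σ f l hσ0 hσ1 hlen
  intro t ht
  have hval : ((2 + t : ℕ) : Fin (n+3)).val = 2 + t := by
    rw [Fin.val_natCast, Nat.mod_eq_of_lt (by omega)]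
  rw [hσapp]
  simp only [hgdef]
  rw [List.get_eq_getElem]
  simp only [hval, hL]
  simp only [show 2 + t = t+1+1 by omega, List.getElem_cons_succ]

/-- DP correctness: the minimum over first customers `f ≠ 0` of the Bellman value of the
initial state equals the minimum QTSP tour cost over tours starting at customer 0. -/
theorem dpV_correct {n : ℕ} (c : Fin (n + 3) → Fin (n + 3) → Fin (n + 3) → ℝ) :
    sInf {x : ℝ | ∃ f : Fin (n + 3), f ≠ 0 ∧
        x = dpV c (Finset.univ \ {0, f}) 0 f f} =
      sInf {x : ℝ | ∃ σ : Equiv.Perm (Fin (n + 3)), σ 0 = 0 ∧ x = tourCost c σ} := by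
  set S := {x : ℝ | ∃ f : Fin (n + 3), f ≠ 0 ∧
      x = dpV c (Finset.univ \ {0, f}) 0 f f} with hS
  set T := {x : ℝ | ∃ σ : Equiv.Perm (Fin (n + 3)), σ 0 = 0 ∧ x = tourCost c σ} with hT
  have hSne : S.Nonempty := ⟨_, 1, one_ne_zero, rfl⟩
  have hTne : T.Nonempty := ⟨_, Equiv.refl _, rfl, rfl⟩
  have hSfin : S.Finite := by
    apply (Set.finite_range (fun f : Fin (n+3) => dpV c (Finset.univ \ {0, f}) 0 f f)).subset
    rintro x ⟨f, -, rfl⟩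
    exact ⟨f, rfl⟩
  have hTfin : T.Finite := by
    apply (Set.finite_range (fun σ : Equiv.Perm (Fin (n+3)) => tourCost c σ)).subset
    rintro x ⟨σ, -, rfl⟩
    exact ⟨σ, rfl⟩
  apply le_antisymm
  · apply le_csInf hTne
    rintro x ⟨σ, h0, rfl⟩
    obtain ⟨l, hnd, htf, hcost⟩ := exists_list_of_perm c σ h0
    have hf : σ 1 ≠ 0 := by
      rw [← h0]
      exact fun h => absurd (σ.injective h) one_ne_zero
    have hle : dpV c (Finset.univ \ {0, σ 1}) 0 (σ 1) (σ 1) ≤ tourCost c σ := by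
      rw [hcost, ← htf]
      exact dpV_le_pcost c (σ 1) l hnd 0 (σ 1)
    exact le_trans (csInf_le hSfin.bddBelow ⟨σ 1, hf, rfl⟩) hle
  · apply le_csInf hSne
    rintro x ⟨f, hf, rfl⟩
    obtain ⟨l, hnd, htf, heq⟩ := exists_list_dpV_eq c f (Finset.univ \ {0, f}) 0 f
    obtain ⟨σ, h0, hcost⟩ := exists_perm_of_list c f hf l hnd htf
    rw [heq, ← hcost]
    exact csInf_le hTfin.bddBelow ⟨σ, h0, rfl⟩
end

section
/- The DIDP dual bound is valid: for any state (U, i, j, f) with 0 ∉ U, j ∉ U, f ∉ U, i ∉ U, and i, j, f, 0 pairwise giving at least the needed distinctness, the exact value V(U,i,j,f) of the Bellman recursion is at least Σ_{k ∈ U ∪ {f,0}} min_{l≠k, m∉{k,l}} c_{l,m,k}. -/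
lemma lb_le {n : ℕ} (c : Fin (n + 3) → Fin (n + 3) → Fin (n + 3) → ℝ)
    (k l m : Fin (n + 3)) (hl : l ≠ k) (hm : m ≠ k) (hml : m ≠ l) :
    sInf {x : ℝ | ∃ l m : Fin (n + 3), l ≠ k ∧ m ≠ k ∧ m ≠ l ∧ x = c l m k} ≤ c l m k := by
  apply csInf_le
  · apply Set.Finite.bddBelow
    apply Set.Finite.subset (Set.finite_range
      (fun p : Fin (n + 3) × Fin (n + 3) => c p.1 p.2 k))
    rintro x ⟨l, m, -, -, -, rfl⟩
    exact ⟨(l, m), rfl⟩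
  · exact ⟨l, m, hl, hm, hml, rfl⟩

/-- The DIDP dual bound is valid: the Bellman value of a state `(U, i, j, f)` is at least
the sum over `k ∈ U ∪ {f, 0}` of the cheapest cost of a triple of pairwise-distinct
customers ending at `k`. -/
theorem dpV_dual_bound {n : ℕ} (c : Fin (n + 3) → Fin (n + 3) → Fin (n + 3) → ℝ)
    (U : Finset (Fin (n + 3))) (i j f : Fin (n + 3))
    (h0U : (0 : Fin (n + 3)) ∉ U) (hiU : i ∉ U) (hjU : j ∉ U) (hfU : f ∉ U)
    (hij : i ≠ j) (hjf : j ≠ f) (hi0 : i ≠ 0) (hj0 : j ≠ 0) (hf0 : f ≠ 0) :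
    ∑ k ∈ insert f (insert 0 U),
        sInf {x : ℝ | ∃ l m : Fin (n + 3), l ≠ k ∧ m ≠ k ∧ m ≠ l ∧ x = c l m k} ≤
      dpV c U i j f := by
  induction U using Finset.strongInduction generalizing i j f with
  | _ U ih =>
  rw [dpV]
  by_cases h : U.Nonempty
  · rw [dif_pos h]
    apply Finset.le_inf'
    rintro ⟨k, hkU⟩ -
    have hkf : k ≠ f := fun e => hfU (e ▸ hkU)
    have hk0 : k ≠ 0 := fun e => h0U (e ▸ hkU)
    have hjk : j ≠ k := fun e => hjU (e ▸ hkU)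
    have hik : i ≠ k := fun e => hiU (e ▸ hkU)
    have key := ih (U.erase k) (Finset.erase_ssubset hkU) j k f
      (fun hmem => h0U (Finset.mem_of_mem_erase hmem))
      (fun hmem => hjU (Finset.mem_of_mem_erase hmem))
      (Finset.notMem_erase k U)
      (fun hmem => hfU (Finset.mem_of_mem_erase hmem))
      hjk hkf hj0 hk0 hf0
    have hset : insert f (insert 0 U) = insert k (insert f (insert 0 (U.erase k))) := by
      rw [Finset.insert_comm k, Finset.insert_comm k, Finset.insert_erase hkU]
    rw [hset, Finset.sum_insert (by simp [hkf, hk0])]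
    exact add_le_add (lb_le c k i j hik hjk (Ne.symm hij)) key
  · rw [dif_neg h]
    rw [Finset.not_nonempty_iff_eq_empty.mp h]
    rw [show (insert f (insert 0 (∅ : Finset (Fin (n+3)))) = insert f {0}) from rfl]
    rw [Finset.sum_insert (by simp [hf0]), Finset.sum_singleton]
    exact add_le_add (lb_le c f j 0 hjf (Ne.symm hf0) (Ne.symm hj0))
      (lb_le c 0 i j hi0 hj0 (Ne.symm hij))
end
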